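/- arXiv:math/0702843 — 2 statements merged into one kernel-verified Lean document; each statement's English description precedes it below -/
import Mathlib

section
/- With σ₁ > σ₂ > 0 and τᵢ = 1/σᵢ, the function V(ϱ) = (1−ϱ²)/(τ₁² − 2ϱτ₁τ₂ + τ₂²) attains its maximum on [−1,1] exactly at ϱ = σ₂/σ₁, and the maximal value is σ₂². -/
/-- For `σ₁ > σ₂ > 0`, `V(ϱ) = (1−ϱ²)/(τ₁² − 2ϱτ₁τ₂ + τ₂²)` attains its maximum
on `[−1,1]` exactly at `ϱ = σ₂/σ₁`, with maximal value `σ₂²`. -/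
theorem variance_max_at_ratio (σ₁ σ₂ : ℝ) (h2 : 0 < σ₂) (h12 : σ₂ < σ₁) :
    let τ₁ : ℝ := 1 / σ₁
    let τ₂ : ℝ := 1 / σ₂
    let V : ℝ → ℝ := fun ϱ => (1 - ϱ^2) / (τ₁^2 - 2*ϱ*τ₁*τ₂ + τ₂^2)
    IsMaxOn V (Set.Icc (-1) 1) (σ₂/σ₁) ∧ V (σ₂/σ₁) = σ₂^2 ∧
    ∀ ϱ ∈ Set.Icc (-1:ℝ) 1, V ϱ = σ₂^2 → ϱ = σ₂/σ₁ := by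
  intro τ₁ τ₂ V
  have h1 : 0 < σ₁ := h2.trans h12
  have hs1 : σ₁ ≠ 0 := ne_of_gt h1
  have hs2 : σ₂ ≠ 0 := ne_of_gt h2
  set t := σ₂ / σ₁ with htdef
  have ht0 : 0 < t := div_pos h2 h1
  have ht1 : t < 1 := (div_lt_one h1).2 h12
  have hD : ∀ ϱ : ℝ, σ₂^2 * (τ₁^2 - 2*ϱ*τ₁*τ₂ + τ₂^2) = (ϱ - t)^2 + (1 - ϱ^2) := by
    intro ϱ
    simp only [τ₁, τ₂, htdef]
    field_simp
    ring
  have hDpos : ∀ ϱ ∈ Set.Icc (-1:ℝ) 1, 0 < τ₁^2 - 2*ϱ*τ₁*τ₂ + τ₂^2 := by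
    intro ϱ hϱ
    have h := hD ϱ
    have h1ρ : 0 ≤ 1 - ϱ^2 := by nlinarith [hϱ.1, hϱ.2]
    by_contra hle
    push_neg at hle
    have hXY : (ϱ - t)^2 + (1 - ϱ^2) ≤ 0 := by nlinarith [sq_nonneg σ₂]
    have hX : (ϱ - t)^2 = 0 := le_antisymm (by linarith [sq_nonneg (ϱ - t)]) (sq_nonneg _)
    have hϱt : ϱ = t := by
      have := pow_eq_zero_iff (n := 2) (by norm_num) |>.mp hX
      linarith
    rw [hϱt] at hXY
    nlinarith [mul_pos (sub_pos.2 ht1) (show (0:ℝ) < 1 + t by linarith)]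
  have hVt : V t = σ₂^2 := by
    have hDt := hDpos t ⟨by linarith, le_of_lt ht1⟩
    show (1 - t^2) / (τ₁^2 - 2*t*τ₁*τ₂ + τ₂^2) = σ₂^2
    rw [div_eq_iff (ne_of_gt hDt), hD t]
    ring
  refine ⟨?_, hVt, ?_⟩
  · intro ϱ hϱ
    have hDϱ := hDpos ϱ hϱ
    have h := hD ϱ
    simp only [Set.mem_setOf_eq, hVt]
    show (1 - ϱ^2) / (τ₁^2 - 2*ϱ*τ₁*τ₂ + τ₂^2) ≤ σ₂^2
    rw [div_le_iff₀ hDϱ]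
    nlinarith [sq_nonneg (ϱ - t)]
  · intro ϱ hϱ hVϱ
    have hDϱ := hDpos ϱ hϱ
    have h := hD ϱ
    have hVϱ' : (1 - ϱ^2) / (τ₁^2 - 2*ϱ*τ₁*τ₂ + τ₂^2) = σ₂^2 := hVϱ
    rw [div_eq_iff (ne_of_gt hDϱ)] at hVϱ'
    have : (ϱ - t)^2 = 0 := by nlinarith
    have := pow_eq_zero_iff (n := 2) (by norm_num) |>.mp this
    linarith
end

section
/- For measurements Yᵢ = μ + ηᵢ, i = 0,…,n, with covariance Σ = SRS, S = diag(1/τ₀,…,1/τₙ), τᵢ > 0, and R_{ij} = ϱ^{|i−j|}, |ϱ| < 1, the inverse variance of the BLUE for μ satisfies V⁻¹ = (1−ϱ²)⁻¹[(1−ϱ)² Σ_{i=0}^n τᵢ² + ϱ Σ_{i=0}^{n−1}(τ_{i+1}−τᵢ)² + ϱ(1−ϱ)(τ₀² + τₙ²)]. -/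
open Matrix Finset

noncomputable def cdiag (n : ℕ) (ϱ : ℝ) (i : ℕ) : ℝ :=
  1 + ϱ^2 - (if i = 0 then ϱ^2 else 0) - (if i = n then ϱ^2 else 0)

noncomputable def bmat (n : ℕ) (ϱ : ℝ) (i k : ℕ) : ℝ :=
  (if k = i then cdiag n ϱ i else 0)
    + (-ϱ) * ((if k = i + 1 then (1:ℝ) else 0) + (if k + 1 = i then (1:ℝ) else 0))

lemma bmat_sum (n : ℕ) (ϱ : ℝ) (i : ℕ) (hi : i ≤ n) (f : ℕ → ℝ) :
    ∑ k ∈ Finset.range (n+1), bmat n ϱ i k * f k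
      = cdiag n ϱ i * f i
        + (-ϱ) * ((if i + 1 ≤ n then f (i+1) else 0)
                  + (if 1 ≤ i then f (i-1) else 0)) := by
  have e : ∀ k ∈ Finset.range (n+1), bmat n ϱ i k * f k
      = (if k = i then cdiag n ϱ i * f k else 0)
        + ((-ϱ) * (if k = i + 1 then f k else 0)
           + (-ϱ) * (if k + 1 = i then f k else 0)) := by
    intro k _
    unfold bmat
    split_ifs <;> ring
  rw [Finset.sum_congr rfl e, Finset.sum_add_distrib, Finset.sum_add_distrib,
      ← Finset.mul_sum, ← Finset.mul_sum, Finset.sum_ite_eq']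
  have h1 : ∑ k ∈ Finset.range (n+1), (if k = i + 1 then f k else 0)
      = if i + 1 ≤ n then f (i+1) else 0 := by
    rw [Finset.sum_ite_eq']
    simp only [Finset.mem_range, Nat.lt_succ_iff, Nat.succ_le_iff]
  have h2 : ∑ k ∈ Finset.range (n+1), (if k + 1 = i then f k else 0)
      = if 1 ≤ i then f (i-1) else 0 := by
    match i, hi with
    | 0, _ => simp
    | (m+1), hi =>
      have e2 : ∀ k, (if k + 1 = m + 1 then f k else 0) = if k = m then f k else 0 := by
        intro k; simp
      rw [Finset.sum_congr rfl fun k _ => e2 k, Finset.sum_ite_eq']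
      have hm : m ∈ Finset.range (n+1) := by simp [Nat.lt_succ_iff]; omega
      simp [hm]
  rw [h1, h2]
  simp [Nat.lt_succ_iff, hi, mul_add]

lemma bmat_mul_pow (n : ℕ) (ϱ : ℝ) {i j : ℕ} (hi : i ≤ n) (hj : j ≤ n) :
    ∑ k ∈ Finset.range (n+1), bmat n ϱ i k * ϱ ^ (Nat.dist k j)
      = if i = j then 1 - ϱ^2 else 0 := by
  rw [bmat_sum n ϱ i hi]
  rcases lt_trichotomy i j with h | rfl | h
  · obtain ⟨m, rfl⟩ : ∃ m, j = i + (m+1) := ⟨j - i - 1, by omega⟩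
    rw [if_neg (show ¬(i = i + (m+1)) by omega),
        (show Nat.dist i (i+(m+1)) = m+1 by unfold Nat.dist; omega),
        (show Nat.dist (i+1) (i+(m+1)) = m by unfold Nat.dist; omega),
        if_pos (show i+1 ≤ n by omega)]
    rcases Nat.eq_zero_or_pos i with rfl | hpos
    · rw [if_neg (show ¬(1 ≤ 0) by omega)]
      unfold cdiag
      rw [if_pos rfl, if_neg (show 0 ≠ n by omega)]
      ring
    · rw [if_pos (show 1 ≤ i by omega),
          (show Nat.dist (i-1) (i+(m+1)) = m+2 by unfold Nat.dist; omega)]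
      unfold cdiag
      rw [if_neg (show i ≠ 0 by omega), if_neg (show i ≠ n by omega)]
      ring
  · rw [if_pos rfl, Nat.dist_self, pow_zero]
    rcases Nat.eq_zero_or_pos i with rfl | hpos
    · rw [if_neg (show ¬(1 ≤ 0) by omega),
          (show Nat.dist (0+1) 0 = 1 by unfold Nat.dist; omega)]
      unfold cdiag
      rcases eq_or_ne 0 n with rfl | hn
      · rw [if_neg (show ¬(0+1 ≤ 0) by omega)]
        norm_num
      · rw [if_pos rfl, if_neg hn, if_pos (show 0+1 ≤ n by omega)]
        ring
    · rw [if_pos (show 1 ≤ i by omega),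
          (show Nat.dist (i-1) i = 1 by unfold Nat.dist; omega)]
      unfold cdiag
      rcases eq_or_ne i n with rfl | hn
      · rw [if_neg (show i ≠ 0 by omega), if_pos rfl, if_neg (show ¬(i+1 ≤ i) by omega)]
        ring
      · rw [if_neg (show i ≠ 0 by omega), if_neg hn, if_pos (show i+1 ≤ n by omega),
            (show Nat.dist (i+1) i = 1 by unfold Nat.dist; omega)]
        ring
  · obtain ⟨m, rfl⟩ : ∃ m, i = j + (m+1) := ⟨i - j - 1, by omega⟩
    rw [if_neg (show ¬(j + (m+1) = j) by omega),
        (show Nat.dist (j+(m+1)) j = m+1 by unfold Nat.dist; omega),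
        (show Nat.dist (j+(m+1)-1) j = m by unfold Nat.dist; omega),
        if_pos (show 1 ≤ j+(m+1) by omega)]
    rcases eq_or_ne (j+(m+1)) n with he | hn
    · rw [if_neg (show ¬(j+(m+1)+1 ≤ n) by omega)]
      unfold cdiag
      rw [if_neg (show j+(m+1) ≠ 0 by omega), if_pos he]
      ring
    · rw [if_pos (show j+(m+1)+1 ≤ n by omega),
          (show Nat.dist (j+(m+1)+1) j = m+2 by unfold Nat.dist; omega)]
      unfold cdiag
      rw [if_neg (show j+(m+1) ≠ 0 by omega), if_neg hn]
      ring

lemma quad_id (n : ℕ) (ϱ : ℝ) (t : ℕ → ℝ) :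
    ∑ i ∈ Finset.range (n+1),
      t i * (cdiag n ϱ i * t i
        + (-ϱ) * ((if i + 1 ≤ n then t (i+1) else 0) + (if 1 ≤ i then t (i-1) else 0)))
      = (1-ϱ)^2 * (∑ i ∈ Finset.range (n+1), t i^2)
        + ϱ * (∑ i ∈ Finset.range n, (t (i+1) - t i)^2)
        + ϱ*(1-ϱ)*(t 0^2 + t n^2) := by
  have e : ∀ i ∈ Finset.range (n+1),
      t i * (cdiag n ϱ i * t i
        + (-ϱ) * ((if i + 1 ≤ n then t (i+1) else 0) + (if 1 ≤ i then t (i-1) else 0)))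
      = ((1+ϱ^2) * t i^2 - (if i = 0 then ϱ^2 * t i^2 else 0)
          - (if i = n then ϱ^2 * t i^2 else 0))
        + (-ϱ) * ((if i + 1 ≤ n then t i * t (i+1) else 0)
          + (if 1 ≤ i then t i * t (i-1) else 0)) := by
    intro i _
    unfold cdiag
    split_ifs <;> ring
  have hP1 : (∑ i ∈ Finset.range (n+1), if i + 1 ≤ n then t i * t (i+1) else 0)
      = ∑ i ∈ Finset.range n, t i * t (i+1) := by
    rw [Finset.sum_range_succ, if_neg (by omega), add_zero]
    exact Finset.sum_congr rfl fun i hi => if_pos (by simp at hi; omega)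
  have hP2 : (∑ i ∈ Finset.range (n+1), if 1 ≤ i then t i * t (i-1) else 0)
      = ∑ i ∈ Finset.range n, t i * t (i+1) := by
    rw [Finset.sum_range_succ']
    rw [if_neg (by omega), add_zero]
    refine Finset.sum_congr rfl fun i hi => ?_
    rw [if_pos (by omega)]
    simp [mul_comm]
  have h0 : (∑ i ∈ Finset.range (n+1), if i = 0 then ϱ^2 * t i^2 else 0)
      = ϱ^2 * t 0^2 := by
    rw [Finset.sum_ite_eq']
    simp
  have hn' : (∑ i ∈ Finset.range (n+1), if i = n then ϱ^2 * t i^2 else 0)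
      = ϱ^2 * t n^2 := by
    rw [Finset.sum_ite_eq']
    simp
  have hmid : ∑ i ∈ Finset.range n, (t (i+1) - t i)^2
      = ((∑ i ∈ Finset.range (n+1), t i^2) - t 0^2)
        + ((∑ i ∈ Finset.range (n+1), t i^2) - t n^2)
        - 2 * ∑ i ∈ Finset.range n, t i * t (i+1) := by
    have h1 : ∑ i ∈ Finset.range (n+1), t i^2
        = (∑ i ∈ Finset.range n, t (i+1)^2) + t 0^2 := Finset.sum_range_succ' _ _
    have h2 : ∑ i ∈ Finset.range (n+1), t i^2
        = (∑ i ∈ Finset.range n, t i^2) + t n^2 := Finset.sum_range_succ _ _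
    have h3 : ∑ i ∈ Finset.range n, (t (i+1) - t i)^2
        = (∑ i ∈ Finset.range n, t (i+1)^2) + (∑ i ∈ Finset.range n, t i^2)
          - 2 * ∑ i ∈ Finset.range n, t i * t (i+1) := by
      rw [Finset.mul_sum, ← Finset.sum_add_distrib, ← Finset.sum_sub_distrib]
      exact Finset.sum_congr rfl fun i _ => by ring
    rw [h3]
    linarith
  rw [Finset.sum_congr rfl e, Finset.sum_add_distrib, Finset.sum_sub_distrib,
      Finset.sum_sub_distrib, h0, hn', ← Finset.mul_sum, ← Finset.mul_sum,
      Finset.sum_add_distrib, hP1, hP2, hmid]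
  ring

/-- Inverse variance identity for the BLUE of a common mean with autocorrelated
errors: `V⁻¹ = (1−ϱ²)⁻¹[(1−ϱ)²∑τᵢ² + ϱ∑(τ_{i+1}−τᵢ)² + ϱ(1−ϱ)(τ₀²+τₙ²)]`. -/
theorem autocorrelated_inverse_variance {n : ℕ} (τ : Fin (n+1) → ℝ)
    (hτ : ∀ i, 0 < τ i) (ϱ : ℝ) (hϱ : |ϱ| < 1) :
    let S : Matrix (Fin (n+1)) (Fin (n+1)) ℝ := Matrix.diagonal (fun i => (τ i)⁻¹)
    let R : Matrix (Fin (n+1)) (Fin (n+1)) ℝ :=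
      Matrix.of fun i j => ϱ ^ (Nat.dist i.val j.val)
    let C : Matrix (Fin (n+1)) (Fin (n+1)) ℝ := S * R * S
    let X : Matrix (Fin (n+1)) (Fin 1) ℝ := Matrix.of fun _ _ => 1
    (Xᵀ * C⁻¹ * X) 0 0 =
      (1 - ϱ^2)⁻¹ * ((1 - ϱ)^2 * (∑ i, (τ i)^2)
        + ϱ * (∑ i : Fin n, (τ i.succ - τ i.castSucc)^2)
        + ϱ * (1 - ϱ) * ((τ 0)^2 + (τ (Fin.last n))^2)) := by
  intro S R C X
  have hR : R = Matrix.of (fun i j : Fin (n+1) => ϱ ^ (Nat.dist i.val j.val)) := rfl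
  have hS : S = Matrix.diagonal (fun i => (τ i)⁻¹) := rfl
  have hC : C = S * R * S := rfl
  have hX : X = Matrix.of (fun _ _ => (1:ℝ)) := rfl
  obtain ⟨hϱ1, hϱ1'⟩ := abs_lt.mp hϱ
  have hϱ2 : (1 - ϱ^2) ≠ 0 := by nlinarith
  set Dτ : Matrix (Fin (n+1)) (Fin (n+1)) ℝ := Matrix.diagonal (fun i => τ i) with hDτ
  set Binv : Matrix (Fin (n+1)) (Fin (n+1)) ℝ :=
    Matrix.of (fun i j : Fin (n+1) => bmat n ϱ i.val j.val) with hBinv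
  have hDS : Dτ * S = 1 := by
    rw [hDτ, hS, Matrix.diagonal_mul_diagonal,
        show (fun i => τ i * (τ i)⁻¹) = fun _ => (1:ℝ) from
          funext fun i => mul_inv_cancel₀ (hτ i).ne']
    exact Matrix.diagonal_one
  have hBR : Binv * R = (1 - ϱ^2) • (1 : Matrix (Fin (n+1)) (Fin (n+1)) ℝ) := by
    ext i j
    rw [Matrix.mul_apply, Matrix.smul_apply, Matrix.one_apply, hBinv, hR]
    simp only [Matrix.of_apply]
    rw [Fin.sum_univ_eq_sum_range (fun k => bmat n ϱ i.val k * ϱ ^ (Nat.dist k j.val)) (n+1)]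
    rw [bmat_mul_pow n ϱ (Nat.lt_succ_iff.mp i.isLt) (Nat.lt_succ_iff.mp j.isLt)]
    simp only [Fin.ext_iff, smul_eq_mul]
    split_ifs <;> simp
  have key : (Dτ * Binv * Dτ) * C = (1-ϱ^2) • 1 := by
    rw [hC]
    calc Dτ * Binv * Dτ * (S * R * S)
        = Dτ * (Binv * ((Dτ * S) * (R * S))) := by simp only [Matrix.mul_assoc]
      _ = Dτ * (Binv * (R * S)) := by rw [hDS, Matrix.one_mul]
      _ = Dτ * ((Binv * R) * S) := by rw [Matrix.mul_assoc]
      _ = (1-ϱ^2) • (Dτ * S) := by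
          rw [hBR, Matrix.smul_mul, Matrix.one_mul, Matrix.mul_smul]
      _ = (1-ϱ^2) • 1 := by rw [hDS]
  have hM : ((1-ϱ^2)⁻¹ • (Dτ * Binv * Dτ)) * C = 1 := by
    rw [Matrix.smul_mul, key, smul_smul, inv_mul_cancel₀ hϱ2, one_smul]
  have hCinv : C⁻¹ = (1-ϱ^2)⁻¹ • (Dτ * Binv * Dτ) := Matrix.inv_eq_left_inv hM
  set t : ℕ → ℝ := fun k => if h : k < n + 1 then τ ⟨k, h⟩ else 0 with ht
  have htv : ∀ j : Fin (n+1), t j.val = τ j := by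
    intro j
    rw [ht]
    simp [j.isLt]
  rw [hCinv, hX]
  have entry : (((Matrix.of (fun _ _ => (1:ℝ)) : Matrix (Fin (n+1)) (Fin 1) ℝ)ᵀ *
      ((1-ϱ^2)⁻¹ • (Dτ * Binv * Dτ)) *
      (Matrix.of (fun _ _ => (1:ℝ)) : Matrix (Fin (n+1)) (Fin 1) ℝ) :
      Matrix (Fin 1) (Fin 1) ℝ)) 0 0
      = ∑ j : Fin (n+1), ∑ i : Fin (n+1), (1-ϱ^2)⁻¹ * (τ i * bmat n ϱ i.val j.val * τ j) := by
    rw [Matrix.mul_apply]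
    refine Finset.sum_congr rfl fun j _ => ?_
    rw [Matrix.mul_apply]
    simp only [Matrix.transpose_apply, Matrix.of_apply, one_mul, mul_one, Matrix.smul_apply,
      smul_eq_mul]
    refine Finset.sum_congr rfl fun i _ => ?_
    rw [hDτ, hBinv, Matrix.mul_diagonal, Matrix.diagonal_mul]
    simp only [Matrix.of_apply]
  rw [entry, Finset.sum_comm]
  have inner : ∀ i : Fin (n+1),
      ∑ j : Fin (n+1), (1-ϱ^2)⁻¹ * (τ i * bmat n ϱ i.val j.val * τ j)
      = (1-ϱ^2)⁻¹ * (t i.val * (cdiag n ϱ i.val * t i.val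
          + (-ϱ) * ((if i.val + 1 ≤ n then t (i.val+1) else 0)
                    + (if 1 ≤ i.val then t (i.val-1) else 0)))) := by
    intro i
    have : ∀ j : Fin (n+1), (1-ϱ^2)⁻¹ * (τ i * bmat n ϱ i.val j.val * τ j)
        = (1-ϱ^2)⁻¹ * τ i * (bmat n ϱ i.val j.val * t j.val) := by
      intro j; rw [htv j]; ring
    rw [Finset.sum_congr rfl fun j _ => this j, ← Finset.mul_sum,
        Fin.sum_univ_eq_sum_range (fun k => bmat n ϱ i.val k * t k) (n+1),
        bmat_sum n ϱ i.val (Nat.lt_succ_iff.mp i.isLt) t, htv i]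
    ring
  rw [Finset.sum_congr rfl fun i _ => inner i, ← Finset.mul_sum,
      Fin.sum_univ_eq_sum_range (fun k => t k * (cdiag n ϱ k * t k
          + (-ϱ) * ((if k + 1 ≤ n then t (k+1) else 0)
                    + (if 1 ≤ k then t (k-1) else 0)))) (n+1),
      quad_id n ϱ t]
  congr 1
  have e1 : ∑ i ∈ Finset.range (n+1), t i ^ 2 = ∑ i : Fin (n+1), τ i ^ 2 := by
    rw [← Fin.sum_univ_eq_sum_range (fun k => t k ^ 2) (n+1)]
    exact Finset.sum_congr rfl fun i _ => by rw [htv i]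
  have e2 : ∑ i ∈ Finset.range n, (t (i+1) - t i) ^ 2
      = ∑ i : Fin n, (τ i.succ - τ i.castSucc) ^ 2 := by
    rw [← Fin.sum_univ_eq_sum_range (fun k => (t (k+1) - t k) ^ 2) n]
    refine Finset.sum_congr rfl fun i _ => ?_
    have h1 : t (i.val + 1) = τ i.succ := by
      have := htv i.succ
      simpa using this
    have h2 : t i.val = τ i.castSucc := by
      have := htv i.castSucc
      simpa using this
    rw [h1, h2]
  have e3 : t 0 = τ 0 := by simpa using htv 0
  have e4 : t n = τ (Fin.last n) := by simpa using htv (Fin.last n)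
  rw [e1, e2, e3, e4]
end
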